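/- Let R be a zero-symmetric right near-ring, M a near-ring module over R, and P an R-ideal of M with RM ⊄ P. For each v ∈ {0,2,3,c}: if P is a v-prime R-ideal of M, then P is a v-classical prime R-ideal of M. -/
import Mathlib


open Pointwise

/-- A zero-symmetric right near-ring: `(R,+)` is a (not necessarily abelian) group,
`(R,·)` is a semigroup, right distributivity holds, and `r * 0 = 0`. -/
class NearRing (R : Type*) extends AddGroup R, Semigroup R where
  right_distrib : ∀ a b c : R, (a + b) * c = a * c + b * c
  mul_zero : ∀ a : R, a * 0 = 0

/-- A (left) near-ring module over a right near-ring `R`. -/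
class NearRingModule (R : Type*) [NearRing R] (M : Type*) [AddGroup M] extends
    SMul R M where
  add_smul : ∀ (r s : R) (m : M), (r + s) • m = r • m + s • m
  mul_smul : ∀ (r s : R) (m : M), (r * s) • m = r • s • m

/-- A subgroup of a (not necessarily abelian) additive group, as a set. -/
def IsSubgrp {G : Type*} [AddGroup G] (H : Set G) : Prop :=
  (0 : G) ∈ H ∧ (∀ x ∈ H, ∀ y ∈ H, x + y ∈ H) ∧ ∀ x ∈ H, -x ∈ H

/-- A normal subgroup of an additive group, as a set. -/
def IsNormalSubgrp {G : Type*} [AddGroup G] (H : Set G) : Prop :=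
  IsSubgrp H ∧ ∀ g : G, ∀ h ∈ H, g + h + -g ∈ H

/-- An `R`-submodule of a near-ring module `M`: a subgroup `N` with `RN ⊆ N`. -/
def IsRSubmodule (R : Type*) [NearRing R] {M : Type*} [AddGroup M]
    [NearRingModule R M] (N : Set M) : Prop :=
  IsSubgrp N ∧ ∀ r : R, ∀ n ∈ N, r • n ∈ N

/-- An `R`-ideal of a near-ring module `M`: a normal subgroup `P` with
`r • (m + p) - r • m ∈ P`. -/
def IsRIdeal (R : Type*) [NearRing R] {M : Type*} [AddGroup M]
    [NearRingModule R M] (P : Set M) : Prop :=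
  IsNormalSubgrp P ∧ ∀ (r : R) (m : M), ∀ p ∈ P, r • (m + p) - r • m ∈ P

/-- A (two-sided) ideal of the near-ring `R`. -/
def IsIdeal {R : Type*} [NearRing R] (I : Set R) : Prop :=
  IsNormalSubgrp I ∧ (∀ i ∈ I, ∀ r : R, i * r ∈ I) ∧
    ∀ r₁ r₂ : R, ∀ i ∈ I, r₁ * (r₂ + i) - r₁ * r₂ ∈ I

/-- A left `R`-subgroup of `R`: a subgroup `A` of `(R,+)` with `RA ⊆ A`. -/
def IsLeftRSubgroup {R : Type*} [NearRing R] (A : Set R) : Prop :=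
  IsSubgrp A ∧ ∀ r : R, ∀ a ∈ A, r * a ∈ A

/-- `P` satisfies the 0-classical prime condition: `ABN ⊆ P` implies `AN ⊆ P` or
`BN ⊆ P` for all ideals `A, B` of `R` and all `R`-submodules `N` of `M`. -/
def Classical0Prime (R : Type*) [NearRing R] {M : Type*} [AddGroup M]
    [NearRingModule R M] (P : Set M) : Prop :=
  ∀ (A B : Set R) (N : Set M), IsIdeal A → IsIdeal B → IsRSubmodule R N →
    (A * B) • N ⊆ P → A • N ⊆ P ∨ B • N ⊆ P

/-- `P` satisfies the 2-classical prime condition (with left `R`-subgroups `A, B`). -/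
def Classical2Prime (R : Type*) [NearRing R] {M : Type*} [AddGroup M]
    [NearRingModule R M] (P : Set M) : Prop :=
  ∀ (A B : Set R) (N : Set M), IsLeftRSubgroup A → IsLeftRSubgroup B →
    IsRSubmodule R N → (A * B) • N ⊆ P → A • N ⊆ P ∨ B • N ⊆ P

/-- `P` satisfies the 3-classical prime condition: `(aR)(bR)N ⊆ P` implies
`aN ⊆ P` or `bN ⊆ P`. -/
def Classical3Prime (R : Type*) [NearRing R] {M : Type*} [AddGroup M]
    [NearRingModule R M] (P : Set M) : Prop :=
  ∀ (a b : R) (N : Set M), IsRSubmodule R N →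
    ((({a} : Set R) * Set.univ) * (({b} : Set R) * Set.univ)) • N ⊆ P →
    a • N ⊆ P ∨ b • N ⊆ P

/-- `P` satisfies the c-classical prime condition: `(aRb)N ⊆ P` implies
`aN ⊆ P` or `bN ⊆ P`. -/
def ClassicalCPrime (R : Type*) [NearRing R] {M : Type*} [AddGroup M]
    [NearRingModule R M] (P : Set M) : Prop :=
  ∀ (a b : R) (N : Set M), IsRSubmodule R N →
    (({a} : Set R) * Set.univ * ({b} : Set R)) • N ⊆ P →
    a • N ⊆ P ∨ b • N ⊆ P

/-- `P` satisfies the 0-prime (Dauns/Juglal) condition: `AB ⊆ P` implies `AM ⊆ P` or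
`B ⊆ P` for all ideals `A` of `R` and `R`-submodules `B` of `M`. -/
def Prime0 (R : Type*) [NearRing R] {M : Type*} [AddGroup M]
    [NearRingModule R M] (P : Set M) : Prop :=
  ∀ (A : Set R) (B : Set M), IsIdeal A → IsRSubmodule R B →
    A • B ⊆ P → A • (Set.univ : Set M) ⊆ P ∨ B ⊆ P

/-- `P` satisfies the 2-prime condition (with left `R`-subgroups `A`). -/
def Prime2 (R : Type*) [NearRing R] {M : Type*} [AddGroup M]
    [NearRingModule R M] (P : Set M) : Prop :=
  ∀ (A : Set R) (B : Set M), IsLeftRSubgroup A → IsRSubmodule R B →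
    A • B ⊆ P → A • (Set.univ : Set M) ⊆ P ∨ B ⊆ P

/-- `P` satisfies the 3-prime condition: `aRm ⊆ P` implies `aM ⊆ P` or `m ∈ P`. -/
def Prime3 (R : Type*) [NearRing R] {M : Type*} [AddGroup M]
    [NearRingModule R M] (P : Set M) : Prop :=
  ∀ (a : R) (m : M), (({a} : Set R) * Set.univ) • ({m} : Set M) ⊆ P →
    a • (Set.univ : Set M) ⊆ P ∨ m ∈ P

/-- `P` satisfies the c-prime (completely prime) condition: `rm ∈ P` implies
`rM ⊆ P` or `m ∈ P`. -/
def PrimeC (R : Type*) [NearRing R] {M : Type*} [AddGroup M]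
    [NearRingModule R M] (P : Set M) : Prop :=
  ∀ (r : R) (m : M), r • m ∈ P → r • (Set.univ : Set M) ⊆ P ∨ m ∈ P

section Aux

variable {R M : Type*} [NearRing R] [AddGroup M] [NearRingModule R M]

lemma nrm_zero_smul (m : M) : (0 : R) • m = 0 := by
  have h := NearRingModule.add_smul (0 : R) 0 m
  rw [add_zero] at h
  exact (left_eq_add.mp h)

lemma nrm_smul_zero (r : R) : r • (0 : M) = 0 := by
  calc r • (0 : M) = r • ((0 : R) • (0 : M)) := by rw [nrm_zero_smul]
    _ = (r * 0) • (0 : M) := (NearRingModule.mul_smul _ _ _).symm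
    _ = (0 : R) • (0 : M) := by rw [NearRing.mul_zero]
    _ = 0 := nrm_zero_smul _

lemma nrm_neg_smul (r : R) (m : M) : (-r) • m = -(r • m) := by
  have h : (-r + r) • m = (-r) • m + r • m := NearRingModule.add_smul _ _ _
  rw [neg_add_cancel, nrm_zero_smul] at h
  exact eq_neg_of_add_eq_zero_left h.symm

lemma nrm_smul_mem {P : Set M} (hP : IsRIdeal R P) (r : R) {p : M} (hp : p ∈ P) :
    r • p ∈ P := by
  have h := hP.2 r 0 p hp
  rwa [zero_add, nrm_smul_zero, sub_zero] at h

lemma orbit_isSubmodule {B : Set R} (hB : IsSubgrp B)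
    (hmul : ∀ r : R, ∀ b ∈ B, r * b ∈ B) (n : M) :
    IsRSubmodule R ((fun b : R => b • n) '' B) := by
  refine ⟨⟨⟨0, hB.1, nrm_zero_smul n⟩, ?_, ?_⟩, ?_⟩
  · rintro x ⟨b, hb, rfl⟩ y ⟨c, hc, rfl⟩
    exact ⟨b + c, hB.2.1 _ hb _ hc, NearRingModule.add_smul b c n⟩
  · rintro x ⟨b, hb, rfl⟩
    exact ⟨-b, hB.2.2 _ hb, nrm_neg_smul b n⟩
  · rintro r x ⟨b, hb, rfl⟩
    exact ⟨r * b, hmul r b hb, NearRingModule.mul_smul r b n⟩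

lemma ideal_mul_left {B : Set R} (hB : IsIdeal B) : ∀ r : R, ∀ b ∈ B, r * b ∈ B := by
  intro r b hb
  have h := hB.2.2 r 0 b hb
  rwa [zero_add, NearRing.mul_zero, sub_zero] at h

lemma classical_aux (P : Set M) (A B : Set R) (N : Set M)
    (hBsub : IsSubgrp B) (hBmul : ∀ r : R, ∀ b ∈ B, r * b ∈ B)
    (hprA : ∀ B' : Set M, IsRSubmodule R B' → A • B' ⊆ P →
      A • (Set.univ : Set M) ⊆ P ∨ B' ⊆ P)
    (h : (A * B) • N ⊆ P) : A • N ⊆ P ∨ B • N ⊆ P := by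
  by_cases hc : ∀ n ∈ N, ∀ b ∈ B, b • n ∈ P
  · right
    intro x hx
    rw [Set.mem_smul] at hx
    obtain ⟨b, hb, n, hn, rfl⟩ := hx
    exact hc n hn b hb
  · push_neg at hc
    obtain ⟨n₀, hn₀, b₀, hb₀, hb₀n₀⟩ := hc
    have hsubm := orbit_isSubmodule hBsub hBmul n₀ (R := R) (M := M)
    have hAS : A • ((fun b : R => b • n₀) '' B) ⊆ P := by
      intro x hx
      rw [Set.mem_smul] at hx
      obtain ⟨a, ha, y, ⟨b, hb, rfl⟩, rfl⟩ := hx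
      have hmem : (a * b) • n₀ ∈ P := h (Set.smul_mem_smul (Set.mul_mem_mul ha hb) hn₀)
      rwa [NearRingModule.mul_smul] at hmem
    rcases hprA _ hsubm hAS with h1 | h1
    · left
      intro x hx
      rw [Set.mem_smul] at hx
      obtain ⟨a, ha, n, hn, rfl⟩ := hx
      exact h1 (Set.smul_mem_smul ha (Set.mem_univ n))
    · exact absurd (h1 ⟨b₀, hb₀, rfl⟩) hb₀n₀

end Aux

/-- Statement 9: every `v`-prime `R`-ideal of `M` is a `v`-classical prime `R`-ideal
of `M`, for `v ∈ {0,2,3,c}`. -/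
theorem stmt_9 {R M : Type*} [NearRing R] [AddGroup M] [NearRingModule R M]
    (P : Set M) (hP : IsRIdeal R P)
    (hRM : ¬ (Set.univ : Set R) • (Set.univ : Set M) ⊆ P) :
    (Prime0 R P → Classical0Prime R P) ∧
    (Prime2 R P → Classical2Prime R P) ∧
    (Prime3 R P → Classical3Prime R P) ∧
    (PrimeC R P → ClassicalCPrime R P) := by
  have hsm : ∀ r : R, ∀ p ∈ P, r • p ∈ P := fun r p hp => nrm_smul_mem hP r hp
  refine ⟨?_, ?_, ?_, ?_⟩
  · -- v = 0
    intro h0 A B N hA hB hN habn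
    exact classical_aux P A B N hB.1.1 (ideal_mul_left hB)
      (fun B' hB' hAB' => h0 A B' hA hB' hAB') habn
  · -- v = 2
    intro h2 A B N hA hB hN habn
    exact classical_aux P A B N hB.1 hB.2
      (fun B' hB' hAB' => h2 A B' hA hB' hAB') habn
  · -- v = 3
    intro h3 a b N hN habn
    by_cases hc : ∀ s : R, ∀ n ∈ N, (b * s) • n ∈ P
    · right
      intro x hx
      rw [Set.mem_smul_set] at hx
      obtain ⟨n, hn, rfl⟩ := hx
      have hsub : (({b} : Set R) * Set.univ) • ({n} : Set M) ⊆ P := by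
        intro x hx
        rw [Set.mem_smul] at hx
        obtain ⟨y, hy, m', hm', rfl⟩ := hx
        rw [Set.mem_mul] at hy
        obtain ⟨b', hb', s, hs, rfl⟩ := hy
        rw [Set.mem_singleton_iff] at hb' hm'
        rw [hb', hm']
        exact hc s n hn
      rcases h3 b n hsub with h1 | h1
      · exact h1 (Set.smul_mem_smul_set (Set.mem_univ n))
      · exact hsm b n h1
    · push_neg at hc
      obtain ⟨s₀, n₀, hn₀, hm₀⟩ := hc
      have hsub : (({a} : Set R) * Set.univ) • ({(b * s₀) • n₀} : Set M) ⊆ P := by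
        intro x hx
        rw [Set.mem_smul] at hx
        obtain ⟨y, hy, m', hm', rfl⟩ := hx
        rw [Set.mem_mul] at hy
        obtain ⟨a', ha', r, hr, rfl⟩ := hy
        rw [Set.mem_singleton_iff] at ha' hm'
        rw [ha', hm']
        have : ((a * r) * (b * s₀)) • n₀ ∈ P := by
          refine habn (Set.smul_mem_smul ?_ hn₀)
          exact Set.mul_mem_mul (Set.mul_mem_mul rfl (Set.mem_univ r))
            (Set.mul_mem_mul rfl (Set.mem_univ s₀))
        rwa [NearRingModule.mul_smul] at this
      rcases h3 a ((b * s₀) • n₀) hsub with h1 | h1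
      · left
        intro x hx
        rw [Set.mem_smul_set] at hx
        obtain ⟨n, hn, rfl⟩ := hx
        exact h1 (Set.smul_mem_smul_set (Set.mem_univ n))
      · exact absurd h1 hm₀
  · -- v = c
    intro hcp a b N hN habn
    have hex : ∃ (r₀ : R) (m₀ : M), r₀ • m₀ ∉ P := by
      by_contra hno
      push_neg at hno
      refine hRM ?_
      intro x hx
      rw [Set.mem_smul] at hx
      obtain ⟨r, -, m, -, rfl⟩ := hx
      exact hno r m
    obtain ⟨r₀, m₀, hr₀⟩ := hex
    by_cases h1 : ∀ r : R, ∀ n ∈ N, r • (b • n) ∈ P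
    · right
      intro x hx
      rw [Set.mem_smul_set] at hx
      obtain ⟨n, hn, rfl⟩ := hx
      rcases hcp r₀ (b • n) (h1 r₀ n hn) with h2 | h2
      · exact absurd (h2 (Set.smul_mem_smul_set (Set.mem_univ m₀))) hr₀
      · exact h2
    · push_neg at h1
      obtain ⟨r₁, n₁, hn₁, hx₁⟩ := h1
      have hmem : a • (r₁ • (b • n₁)) ∈ P := by
        have : ((a * r₁) * b) • n₁ ∈ P := by
          refine habn (Set.smul_mem_smul ?_ hn₁)
          exact Set.mul_mem_mul (Set.mul_mem_mul rfl (Set.mem_univ r₁)) rfl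
        rw [NearRingModule.mul_smul, NearRingModule.mul_smul] at this
        exact this
      rcases hcp a (r₁ • (b • n₁)) hmem with h2 | h2
      · left
        intro x hx
        rw [Set.mem_smul_set] at hx
        obtain ⟨n, hn, rfl⟩ := hx
        exact h2 (Set.smul_mem_smul_set (Set.mem_univ n))
      · exact absurd h2 hx₁
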